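/- arXiv:2002.06796 — 2 statements merged into one kernel-verified Lean document; each statement's English description precedes it below -/
import Mathlib

section
/- For all integers n and k with 2 ≤ k < n, the following inequality holds (over the real numbers): Σ_{d=⌈n/(k+1)⌉}^{⌊(n-1)/(k-1)⌋} ((k+1)d - n) < (1/2)·( (4n² + n(k³+k²-5k-5) - k³ + 3k + 2)/(k-1)² + 3nk + k² + k ). In particular, this sum is O(n²/k² + kn). -/
/-!
The summands form an arithmetic progression with common difference `c = k + 1`, and such a
progression with last term `x` sums to at most `(x + c/2)² / (2c)`: adding a term `y + c` raises
the bound by exactly `((y + 3c/2)² - (y + c/2)²) / (2c) = y + c`. The first term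
`(k + 1)⌈n/(k+1)⌉ - n` is nonnegative, so the last term lies in `[0, (2n - k - 1)/(k - 1)]`
whenever the sum is nonempty, and what remains is a polynomial inequality in `n` and `k`.
-/

open Finset

theorem sum_Ico_linear_le (c N : ℝ) (hc : 0 < c) (a b : ℕ) :
    ∑ d ∈ Ico a b, (c * d - N) ≤ (c * b - N - c / 2) ^ 2 / (2 * c) := by
  induction b with
  | zero => rw [Ico_eq_empty_of_le a.zero_le, sum_empty]; positivity
  | succ b ih =>
    rcases le_or_gt a b with hab | hba
    · rw [sum_Ico_succ_top hab]
      calc ∑ d ∈ Ico a b, (c * d - N) + (c * b - N)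
          ≤ (c * b - N - c / 2) ^ 2 / (2 * c) + (c * b - N) := by gcongr
        _ = (c * ↑(b + 1) - N - c / 2) ^ 2 / (2 * c) := by
          field_simp
          push_cast
          ring
    · rw [Ico_eq_empty (by omega), sum_empty]
      positivity

theorem sum_Icc_linear_le (c N X : ℝ) (hc : 0 < c) (a b : ℕ) (ha : N ≤ c * a)
    (hb : c * b - N ≤ X) :
    ∑ d ∈ Icc a b, (c * d - N) ≤ (X + c / 2) ^ 2 / (2 * c) := by
  rcases lt_or_ge b a with hba | hab
  · rw [Icc_eq_empty (by omega), sum_empty]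
    positivity
  have hlast : 0 ≤ c * b - N := by
    have : (a : ℝ) ≤ b := by exact_mod_cast hab
    nlinarith
  calc ∑ d ∈ Icc a b, (c * d - N) = ∑ d ∈ Ico a (b + 1), (c * d - N) := by
        rw [Ico_add_one_right_eq_Icc]
    _ ≤ (c * ↑(b + 1) - N - c / 2) ^ 2 / (2 * c) := sum_Ico_linear_le c N hc a (b + 1)
    _ = (c * b - N + c / 2) ^ 2 / (2 * c) := by push_cast; ring
    _ ≤ (X + c / 2) ^ 2 / (2 * c) := by gcongr

theorem cadence_bound_lt (n k : ℝ) (hk : 2 ≤ k) (hn : 0 ≤ n) :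
    ((2 * n - k - 1) / (k - 1) + (k + 1) / 2) ^ 2 / (2 * (k + 1))
      < (1 / 2) * ((4 * n ^ 2 + n * (k ^ 3 + k ^ 2 - 5 * k - 5) - k ^ 3 + 3 * k + 2)
          / (k - 1) ^ 2 + 3 * n * k + k ^ 2 + k) := by
  have hk1 : 0 < k - 1 := by linarith
  have hlhs : ((2 * n - k - 1) / (k - 1) + (k + 1) / 2) ^ 2 / (2 * (k + 1))
      = (4 * n + (k - 3) * (k + 1)) ^ 2 / (8 * (k + 1) * (k - 1) ^ 2) := by
    field_simp
    ring
  have hrhs : (1 / 2) * ((4 * n ^ 2 + n * (k ^ 3 + k ^ 2 - 5 * k - 5) - k ^ 3 + 3 * k + 2)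
          / (k - 1) ^ 2 + 3 * n * k + k ^ 2 + k)
      = 4 * (k + 1) * (4 * n ^ 2 + n * (k ^ 3 + k ^ 2 - 5 * k - 5) - k ^ 3 + 3 * k + 2
          + (3 * n * k + k ^ 2 + k) * (k - 1) ^ 2) / (8 * (k + 1) * (k - 1) ^ 2) := by
    field_simp
    ring
  rw [hlhs, hrhs]
  gcongr
  have hk2 : 0 ≤ k - 2 := by linarith
  have hn2 : 0 ≤ n ^ 2 * k := by positivity
  have hn1 : 0 ≤ (k + 1) * n * ((k - 2) * (4 * k ^ 2 + 3 * k + 2) + 5) := by positivity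
  have hc : 0 < (k + 1) ^ 2 * ((k - 2) * (4 * k ^ 2 - 5 * k + 4) + 7) := by
    have : 0 < 4 * k ^ 2 - 5 * k + 4 := by nlinarith
    positivity
  linear_combination 16 * hn2 + 4 * hn1 + hc

/-- For `2 ≤ k < n`, the sum `∑_{d=⌈n/(k+1)⌉}^{⌊(n-1)/(k-1)⌋} ((k+1)d - n)` is
strictly less than
`(1/2)((4n² + n(k³+k²-5k-5) - k³ + 3k + 2)/(k-1)² + 3nk + k² + k)`. -/
theorem stmt_11 (n k : ℕ) (hk : 2 ≤ k) (hkn : k < n) :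
    (∑ d ∈ Finset.Icc ((n + k) / (k + 1)) ((n - 1) / (k - 1)),
        (((k : ℝ) + 1) * (d : ℝ) - (n : ℝ)))
      < (1 / 2) * ((4 * (n : ℝ) ^ 2 + (n : ℝ) * ((k : ℝ) ^ 3 + (k : ℝ) ^ 2 - 5 * (k : ℝ) - 5)
            - (k : ℝ) ^ 3 + 3 * (k : ℝ) + 2) / ((k : ℝ) - 1) ^ 2
          + 3 * (n : ℝ) * (k : ℝ) + (k : ℝ) ^ 2 + (k : ℝ)) := by
  have hkR : (2 : ℝ) ≤ k := by exact_mod_cast hk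
  have hlow : (n : ℝ) ≤ (k + 1) * ((n + k) / (k + 1) : ℕ) := by
    have := Nat.div_add_mod (n + k) (k + 1)
    have := Nat.mod_lt (n + k) (by omega : 0 < k + 1)
    exact_mod_cast (by omega : n ≤ (k + 1) * ((n + k) / (k + 1)))
  have hup : ((k : ℝ) + 1) * ((n - 1) / (k - 1) : ℕ) - n ≤ (2 * n - k - 1) / (k - 1) := by
    have hfloor : (((n - 1) / (k - 1) : ℕ) : ℝ) * (k - 1) ≤ n - 1 := by
      have h : (((n - 1) / (k - 1) * (k - 1) : ℕ) : ℝ) ≤ ((n - 1 : ℕ) : ℝ) :=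
        Nat.cast_le.mpr (Nat.div_mul_le_self _ _)
      rwa [Nat.cast_mul, Nat.cast_sub (by omega : 1 ≤ k), Nat.cast_sub (by omega : 1 ≤ n),
        Nat.cast_one] at h
    rw [le_div_iff₀ (by linarith)]
    nlinarith
  exact (sum_Icc_linear_le _ _ _ (by positivity) _ _ hlow hup).trans_lt
    (cadence_bound_lt n k hkR n.cast_nonneg)
end

section
/- Let T be a string of length n, let c be a character, and let z be a position with 1 ≤ z ≤ n and T[z] = c. Let δ_c be the indicator sequence of c in T (δ_c[i] = 1 if T[i] = c and 0 otherwise) and let C(2z) = |{(x,y) : 1 ≤ x,y ≤ n, x+y = 2z, δ_c[x]·δ_c[y] = 1}| be the value of the acyclic convolution of δ_c with itself at index 2z. Then C(2z) = 2·|{d ≥ 1 : 1 ≤ z-d, z+d ≤ n, T[z-d] = T[z+d] = c}| + 1; that is, the number f[z] of 3-sub-cadences (i,d) of character c whose middle position i+d equals z is exactly (C(2z)-1)/2. -/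
/-!
Pairs `(x, y)` with `x + y = 2z` and both positions carrying `c` are symmetric about `z`: the
pair `(z, z)` is one of them, and every other one is `(z - d, z + d)` or its swap for a unique
`d ≥ 1`. Such a `d` is exactly a 3-sub-cadence `(z - d, d)` with middle position `z`.
-/

open Finset

namespace Cadence

variable (P : ℕ → Prop) [DecidablePred P] (n z : ℕ)

/-- The pairs counted by the self-convolution of the indicator of `P` on `[1, n]` at index `2z`. -/
def convolutionPairs : Finset (ℕ × ℕ) :=
  (Icc 1 n ×ˢ Icc 1 n).filter (fun p => p.1 + p.2 = 2 * z ∧ P p.1 ∧ P p.2)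

def mirrorDistances : Finset ℕ :=
  (Icc 1 n).filter (fun d => 1 ≤ z - d ∧ z + d ≤ n ∧ P (z - d) ∧ P (z + d))

/-- A pair `(i, d)` stands for the cadence `i, i + d, i + 2d`. -/
def cadencesWithMiddle : Finset (ℕ × ℕ) :=
  (Icc 1 n ×ˢ Icc 1 n).filter (fun p =>
    p.1 + 2 * p.2 ≤ n ∧ P p.1 ∧ P (p.1 + p.2) ∧ P (p.1 + 2 * p.2) ∧ p.1 + p.2 = z)

variable {P n z}

@[simp]
theorem mem_convolutionPairs {p : ℕ × ℕ} :
    p ∈ convolutionPairs P n z ↔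
      (1 ≤ p.1 ∧ p.1 ≤ n) ∧ (1 ≤ p.2 ∧ p.2 ≤ n) ∧ p.1 + p.2 = 2 * z ∧ P p.1 ∧ P p.2 := by
  simp [convolutionPairs, and_assoc]

@[simp]
theorem mem_mirrorDistances {d : ℕ} :
    d ∈ mirrorDistances P n z ↔
      (1 ≤ d ∧ d ≤ n) ∧ 1 ≤ z - d ∧ z + d ≤ n ∧ P (z - d) ∧ P (z + d) := by
  simp [mirrorDistances]

theorem card_convolutionPairs_fst_lt :
    #((convolutionPairs P n z).filter (·.1 < z)) = #(mirrorDistances P n z) := by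
  apply card_nbij' (fun p => z - p.1) (fun d => (z - d, z + d))
  · rintro ⟨x, y⟩ hp
    simp only [mem_coe, mem_filter, mem_convolutionPairs,
      mem_mirrorDistances] at hp ⊢
    obtain ⟨⟨hx, hy, hsum, hPx, hPy⟩, hxz⟩ := hp
    rw [show z - (z - x) = x by omega, show z + (z - x) = y by omega]
    exact ⟨by omega, by omega, by omega, hPx, hPy⟩
  · intro d hd
    simp only [mem_coe, mem_filter, mem_convolutionPairs,
      mem_mirrorDistances] at hd ⊢
    obtain ⟨hd, hzd, hzdn, hPl, hPr⟩ := hd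
    exact ⟨⟨by omega, by omega, by omega, hPl, hPr⟩, by omega⟩
  · rintro ⟨x, y⟩ hp
    simp only [mem_coe, mem_filter, mem_convolutionPairs] at hp
    show (z - (z - x), z + (z - x)) = (x, y)
    rw [Prod.mk.injEq]
    omega
  · intro d hd
    simp only [mem_coe, mem_mirrorDistances] at hd
    show z - (z - d) = d
    omega

theorem card_convolutionPairs_lt_fst :
    #((convolutionPairs P n z).filter (z < ·.1)) =
      #((convolutionPairs P n z).filter (·.1 < z)) := by
  refine card_nbij' Prod.swap Prod.swap ?_ ?_ (fun p _ => p.swap_swap) (fun p _ => p.swap_swap) <;>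
  · rintro ⟨x, y⟩ hp
    simp only [mem_coe, mem_filter, mem_convolutionPairs, Prod.swap] at hp ⊢
    obtain ⟨⟨hx, hy, hsum, hPx, hPy⟩, hxz⟩ := hp
    exact ⟨⟨hy, hx, by omega, hPy, hPx⟩, by omega⟩

theorem convolutionPairs_filter_fst_eq (hz1 : 1 ≤ z) (hzn : z ≤ n) (hPz : P z) :
    (convolutionPairs P n z).filter (·.1 = z) = {(z, z)} := by
  ext ⟨x, y⟩
  simp only [mem_filter, mem_convolutionPairs, mem_singleton, Prod.mk.injEq]
  constructor
  · rintro ⟨⟨-, -, hsum, -⟩, rfl⟩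
    omega
  · rintro ⟨rfl, rfl⟩
    exact ⟨⟨⟨hz1, hzn⟩, ⟨hz1, hzn⟩, by omega, hPz, hPz⟩, rfl⟩

theorem card_convolutionPairs (hz1 : 1 ≤ z) (hzn : z ≤ n) (hPz : P z) :
    #(convolutionPairs P n z) = 2 * #(mirrorDistances P n z) + 1 := by
  have hsplit_lt := card_filter_add_card_filter_not (s := convolutionPairs P n z) (·.1 < z)
  have hsplit_ge := card_filter_add_card_filter_not
    (s := (convolutionPairs P n z).filter (¬ ·.1 < z)) (·.1 = z)
  rw [filter_filter, filter_filter] at hsplit_ge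
  have hmid : (convolutionPairs P n z).filter (fun p => ¬ p.1 < z ∧ p.1 = z) =
      (convolutionPairs P n z).filter (·.1 = z) := filter_congr (by intros; omega)
  have hright : (convolutionPairs P n z).filter (fun p => ¬ p.1 < z ∧ ¬ p.1 = z) =
      (convolutionPairs P n z).filter (z < ·.1) := filter_congr (by intros; omega)
  rw [hmid, hright, convolutionPairs_filter_fst_eq hz1 hzn hPz, card_singleton,
    card_convolutionPairs_lt_fst, card_convolutionPairs_fst_lt] at hsplit_ge
  rw [card_convolutionPairs_fst_lt] at hsplit_lt
  omega

theorem card_cadencesWithMiddle (hPz : P z) :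
    #(cadencesWithMiddle P n z) = #(mirrorDistances P n z) := by
  apply card_nbij' Prod.snd (fun d => (z - d, d))
  · rintro ⟨i, d⟩ hp
    simp only [cadencesWithMiddle, mem_coe, mem_filter, mem_product, mem_Icc,
      mem_mirrorDistances] at hp ⊢
    obtain ⟨⟨hi, hd⟩, hn, hPi, -, hPr, rfl⟩ := hp
    rw [show i + d - d = i by omega, show i + d + d = i + 2 * d by omega]
    exact ⟨hd, by omega, by omega, hPi, hPr⟩
  · intro d hd
    simp only [cadencesWithMiddle, mem_coe, mem_filter, mem_product, mem_Icc,
      mem_mirrorDistances] at hd ⊢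
    obtain ⟨hd, hzd, hzdn, hPl, hPr⟩ := hd
    rw [show z - d + d = z by omega, show z - d + 2 * d = z + d by omega]
    exact ⟨⟨⟨by omega, by omega⟩, hd⟩, by omega, hPl, hPz, hPr, rfl⟩
  · rintro ⟨i, d⟩ hp
    simp only [cadencesWithMiddle, mem_coe, mem_filter] at hp
    show (z - d, d) = (i, d)
    rw [Prod.mk.injEq]
    omega
  · intro d _
    rfl

end Cadence

open Cadence in
/-- For a position `z` with `T[z] = c`, the convolution count `C(2z)` of the
indicator of `c` with itself at index `2z` equals twice the number of distances
`d` with `T[z-d] = T[z+d] = c` plus one; hence the number of 3-sub-cadences of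
character `c` with middle position `z` is exactly `(C(2z) - 1)/2`. -/
theorem stmt_12 {A : Type*} [DecidableEq A] (T : ℕ → A) (n : ℕ) (c : A)
    (z : ℕ) (hz1 : 1 ≤ z) (hz2 : z ≤ n) (hzc : T z = c) :
    (((Finset.Icc 1 n) ×ˢ (Finset.Icc 1 n)).filter (fun p : ℕ × ℕ =>
        p.1 + p.2 = 2 * z ∧ T p.1 = c ∧ T p.2 = c)).card
      = 2 * ((Finset.Icc 1 n).filter (fun d =>
          1 ≤ z - d ∧ z + d ≤ n ∧ T (z - d) = c ∧ T (z + d) = c)).card + 1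
    ∧ (((Finset.Icc 1 n) ×ˢ (Finset.Icc 1 n)).filter (fun p : ℕ × ℕ =>
        p.1 + 2 * p.2 ≤ n ∧ T p.1 = c ∧ T (p.1 + p.2) = c ∧ T (p.1 + 2 * p.2) = c ∧
        p.1 + p.2 = z)).card
      = ((((Finset.Icc 1 n) ×ˢ (Finset.Icc 1 n)).filter (fun p : ℕ × ℕ =>
          p.1 + p.2 = 2 * z ∧ T p.1 = c ∧ T p.2 = c)).card - 1) / 2 := by
  have hpairs := card_convolutionPairs (P := (T · = c)) hz1 hz2 hzc
  have hcadences := card_cadencesWithMiddle (P := (T · = c)) (n := n) hzc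
  refine ⟨hpairs, ?_⟩
  change #(cadencesWithMiddle (T · = c) n z) = (#(convolutionPairs (T · = c) n z) - 1) / 2
  omega
end
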